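/- For the Veronese sequence, the odd-indexed subsequence 1/2, 3/7, 11/26, 41/97, 153/362, ... satisfies: its terms p_m/q_m obey p_{m+1} = 4p_m − p_{m−1} and q_{m+1} = 4q_m − q_{m−1} with (p_0,q_0) = (1,2), (p_1,q_1) = (3,7), and converges to 1 − 1/√3. -/

import Mathlib

open Filter Topology

/-- The Veronese sequence over `ℝ`: `α 0 = 1`, `α (i+1) = 2 - α i` for `i` odd, and
`α (i+1) = α i / (3 α i - 1)` for `i` even. -/
noncomputable def veronese : ℕ → ℝ
  | 0 => 1
  | (i + 1) => if Odd i then 2 - veronese i else veronese i / (3 * veronese i - 1)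

/-- Numerators of the odd-indexed terms: `p 0 = 1`, `p 1 = 3`, `p (m+2) = 4 p (m+1) - p m`. -/
def oddNum : ℕ → ℤ
  | 0 => 1
  | 1 => 3
  | (m + 2) => 4 * oddNum (m + 1) - oddNum m

/-- Denominators of the odd-indexed terms: `q 0 = 2`, `q 1 = 7`, `q (m+2) = 4 q (m+1) - q m`. -/
def oddDen : ℕ → ℤ
  | 0 => 2
  | 1 => 7
  | (m + 2) => 4 * oddDen (m + 1) - oddDen m

/-!
Two steps of the recursion, from an odd index to the next, compose to the Möbius map
`f a = (2 - a) / (5 - 3a)` with matrix `[[-1, 2], [-3, 5]]`. That matrix has trace `4` and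
determinant `1`, so by Cayley–Hamilton numerators and denominators both satisfy
`u (m+2) = 4 u (m+1) - u m`. Determinant `1` also gives
`f a - f b = (a - b) / ((5 - 3a)(5 - 3b))`, so `f` is a `1/4`-contraction of `[0, 1]`, whose
fixed point there is the root `1 - 1/√3` of `3L² - 6L + 2`.
-/

noncomputable def veroneseStep (a : ℝ) : ℝ := (2 - a) / (5 - 3 * a)

lemma veronese_two_mul_succ_add_one (m : ℕ) :
    veronese (2 * (m + 1) + 1) = veroneseStep (veronese (2 * m + 1)) := by
  have hodd : veronese (2 * m + 1 + 1) = 2 - veronese (2 * m + 1) := by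
    simp [veronese]
  have heven : veronese (2 * m + 1 + 1 + 1) =
      veronese (2 * m + 1 + 1) / (3 * veronese (2 * m + 1 + 1) - 1) := by
    simp [veronese, parity_simps]
  rw [show 2 * (m + 1) + 1 = 2 * m + 1 + 1 + 1 by ring, heven, hodd, veroneseStep]
  ring_nf

lemma oddNum_succ_and_oddDen_succ (m : ℕ) :
    oddNum (m + 1) = 2 * oddDen m - oddNum m ∧ oddDen (m + 1) = 5 * oddDen m - 3 * oddNum m := by
  induction m using Nat.twoStepInduction with
  | zero => decide
  | one => decide
  | more m ih₀ ih₁ =>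
    have hp : oddNum (m + 2 + 1) = 4 * oddNum (m + 2) - oddNum (m + 1) := rfl
    have hq : oddDen (m + 2 + 1) = 4 * oddDen (m + 2) - oddDen (m + 1) := rfl
    have hp' : oddNum (m + 2) = 4 * oddNum (m + 1) - oddNum m := rfl
    have hq' : oddDen (m + 2) = 4 * oddDen (m + 1) - oddDen m := rfl
    omega

lemma oddDen_pos_and_lt_succ (m : ℕ) : 0 < oddDen m ∧ oddDen m < oddDen (m + 1) := by
  induction m with
  | zero => decide
  | succ m ih =>
    have h : oddDen (m + 1 + 1) = 4 * oddDen (m + 1) - oddDen m := rfl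
    omega

lemma oddDen_pos (m : ℕ) : 0 < oddDen m := (oddDen_pos_and_lt_succ m).1

lemma veronese_two_mul_add_one (m : ℕ) :
    veronese (2 * m + 1) = (oddNum m : ℝ) / (oddDen m : ℝ) := by
  induction m with
  | zero => norm_num [veronese, oddNum, oddDen]
  | succ m ih =>
    obtain ⟨hp, hq⟩ := oddNum_succ_and_oddDen_succ m
    have hq₀ : (oddDen m : ℝ) ≠ 0 := by exact_mod_cast (oddDen_pos m).ne'
    have hnum : 2 - (oddNum m : ℝ) / oddDen m = (2 * oddDen m - oddNum m) / oddDen m := by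
      field_simp
    have hden :
        5 - 3 * ((oddNum m : ℝ) / oddDen m) = (5 * oddDen m - 3 * oddNum m) / oddDen m := by
      field_simp
    rw [veronese_two_mul_succ_add_one, ih, veroneseStep, hnum, hden,
      div_div_div_cancel_right₀ hq₀, hp, hq]
    push_cast
    rfl

lemma veroneseStep_mem_Icc {a : ℝ} (ha : a ∈ Set.Icc 0 1) : veroneseStep a ∈ Set.Icc 0 1 := by
  obtain ⟨ha₀, ha₁⟩ := ha
  have hden : 0 < 5 - 3 * a := by linarith
  exact ⟨div_nonneg (by linarith) hden.le, (div_le_one hden).2 (by linarith)⟩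

lemma veroneseStep_sub_veroneseStep {a b : ℝ} (ha : 5 - 3 * a ≠ 0) (hb : 5 - 3 * b ≠ 0) :
    veroneseStep a - veroneseStep b = (a - b) / ((5 - 3 * a) * (5 - 3 * b)) := by
  rw [veroneseStep, veroneseStep, div_sub_div _ _ ha hb]
  ring

lemma abs_veroneseStep_sub_le {a b : ℝ} (ha : a ≤ 1) (hb : b ≤ 1) :
    |veroneseStep a - veroneseStep b| ≤ |a - b| / 4 := by
  have ha' : 2 ≤ 5 - 3 * a := by linarith
  have hb' : 2 ≤ 5 - 3 * b := by linarith
  have hprod : 4 ≤ (5 - 3 * a) * (5 - 3 * b) := by nlinarith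
  rw [veroneseStep_sub_veroneseStep (by linarith) (by linarith), abs_div,
    abs_of_pos (by linarith : 0 < (5 - 3 * a) * (5 - 3 * b))]
  gcongr

lemma one_sub_inv_sqrt_three_mem_Icc : 1 - 1 / √3 ∈ Set.Icc (0 : ℝ) 1 := by
  have h : 1 / √3 ≤ 1 := by
    rw [div_le_one (by positivity), Real.one_le_sqrt]
    norm_num
  constructor <;> [linarith; linarith [show 0 ≤ 1 / √3 by positivity]]

lemma veroneseStep_one_sub_inv_sqrt_three : veroneseStep (1 - 1 / √3) = 1 - 1 / √3 := by
  have hsq : √3 ^ 2 = 3 := Real.sq_sqrt (by norm_num)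
  have hden : 5 - 3 * (1 - 1 / √3) ≠ 0 := by
    linarith [one_sub_inv_sqrt_three_mem_Icc.2]
  rw [veroneseStep, div_eq_iff hden]
  field_simp
  linear_combination -hsq

lemma veronese_two_mul_add_one_mem_Icc (m : ℕ) : veronese (2 * m + 1) ∈ Set.Icc 0 1 := by
  induction m with
  | zero => norm_num [veronese]
  | succ m ih => exact veronese_two_mul_succ_add_one m ▸ veroneseStep_mem_Icc ih

lemma abs_veronese_two_mul_add_one_sub_le (m : ℕ) :
    |veronese (2 * m + 1) - (1 - 1 / √3)| ≤ (1 / 4) ^ m := by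
  obtain ⟨hL₀, hL₁⟩ := one_sub_inv_sqrt_three_mem_Icc
  induction m with
  | zero =>
    obtain ⟨hx₀, hx₁⟩ := veronese_two_mul_add_one_mem_Icc 0
    simpa using abs_sub_le_of_nonneg_of_le hx₀ hx₁ hL₀ hL₁
  | succ m ih =>
    calc |veronese (2 * (m + 1) + 1) - (1 - 1 / √3)|
        = |veroneseStep (veronese (2 * m + 1)) - veroneseStep (1 - 1 / √3)| := by
          rw [veronese_two_mul_succ_add_one, veroneseStep_one_sub_inv_sqrt_three]
      _ ≤ |veronese (2 * m + 1) - (1 - 1 / √3)| / 4 :=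
          abs_veroneseStep_sub_le (veronese_two_mul_add_one_mem_Icc m).2 hL₁
      _ ≤ (1 / 4) ^ (m + 1) := by rw [pow_succ]; linarith

/-- The odd-indexed subsequence `1/2, 3/7, 11/26, 41/97, 153/362, …` of the Veronese
sequence is `p m / q m` where the numerators and denominators satisfy the second-order
recursion `u (m+2) = 4 u (m+1) - u m` with the indicated initial values, and the
subsequence converges to `1 - 1/√3`. -/
theorem veronese_odd_subsequence :
    (∀ m : ℕ, veronese (2 * m + 1) = (oddNum m : ℝ) / (oddDen m : ℝ)) ∧
    Tendsto (fun m => veronese (2 * m + 1)) atTop (𝓝 (1 - 1 / Real.sqrt 3)) := by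
  refine ⟨veronese_two_mul_add_one, tendsto_iff_dist_tendsto_zero.2 ?_⟩
  exact squeeze_zero (fun _ => dist_nonneg) abs_veronese_two_mul_add_one_sub_le
    (tendsto_pow_atTop_nhds_zero_of_lt_one (by norm_num) (by norm_num))
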